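/- arXiv:1809.05668 — 8 statements merged into one kernel-verified Lean document; each statement's English description precedes it below -/
import Mathlib

section
/- Let V be an (A,B,C,D)-output nulling subspace and S an (A,B,C,D)-input containing subspace. Then the sum V + S is an (A,B,C,D)-input containing subspace. -/
namespace Submodule

variable {R X U Y : Type*} [Semiring R] [AddCommMonoid X] [Module R X]
  [AddCommGroup U] [Module R U] [AddCommGroup Y] [Module R Y]
  (A : X →ₗ[R] X) (B : U →ₗ[R] X) (C : X →ₗ[R] Y) (D : U →ₗ[R] Y)

def IsOutputNulling (V : Submodule R X) : Prop :=
  ∀ x ∈ V, ∃ u, A x + B u ∈ V ∧ C x + D u = 0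

def IsInputContaining (S : Submodule R X) : Prop :=
  ∀ x ∈ S, ∀ u, C x + D u = 0 → A x + B u ∈ S

variable {A B C D}

/-- If `w` drives `v ∈ V` back into `V` with zero output, then `u - w` is an admissible input
at `s ∈ S`, and `A (v + s) + B u` splits as `(A v + B w) + (A s + B (u - w))`. -/
theorem IsOutputNulling.isInputContaining_sup {V S : Submodule R X}
    (hV : V.IsOutputNulling A B C D) (hS : S.IsInputContaining A B C D) :
    (V ⊔ S).IsInputContaining A B C D := by
  intro x hx u hu
  obtain ⟨v, hv, s, hs, rfl⟩ := mem_sup.mp hx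
  obtain ⟨w, hvw, hCvw⟩ := hV v hv
  have hCs : C s + D (u - w) = 0 :=
    calc C s + D (u - w) = C (v + s) + D u - (C v + D w) := by rw [map_sub, map_add]; abel
      _ = 0 := by rw [hu, hCvw, sub_zero]
  have hsplit : A (v + s) + B u = (A v + B w) + (A s + B (u - w)) := by
    rw [map_add, add_add_add_comm, ← map_add B, add_sub_cancel]
  rw [hsplit]
  exact add_mem (mem_sup_left hvw) (mem_sup_right (hS s hs (u - w) hCs))

end Submodule

/-- The sum of an output nulling subspace and an input containing subspace
is input containing. -/
theorem stmt3 {n m p : ℕ}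
    (A : Matrix (Fin n) (Fin n) ℝ) (B : Matrix (Fin n) (Fin m) ℝ)
    (C : Matrix (Fin p) (Fin n) ℝ) (D : Matrix (Fin p) (Fin m) ℝ)
    (V S : Submodule ℝ (Fin n → ℝ))
    (hV : ∀ x ∈ V, ∃ u : Fin m → ℝ,
      A.mulVec x + B.mulVec u ∈ V ∧ C.mulVec x + D.mulVec u = 0)
    (hS : ∀ x ∈ S, ∀ u : Fin m → ℝ,
      C.mulVec x + D.mulVec u = 0 → A.mulVec x + B.mulVec u ∈ S) :
    ∀ x ∈ V ⊔ S, ∀ u : Fin m → ℝ,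
      C.mulVec x + D.mulVec u = 0 → A.mulVec x + B.mulVec u ∈ V ⊔ S :=
  Submodule.IsOutputNulling.isInputContaining_sup
    (A := Matrix.toLin' A) (B := Matrix.toLin' B) (C := Matrix.toLin' C) (D := Matrix.toLin' D)
    hV hS
end

section
/- A subspace V is (A,B,C,D)-output nulling if and only if there exists a feedback matrix F ∈ ℝ^{m×n} such that (A+BF)V ⊆ V and (C+DF)V = 0. -/
/-!
The pairs `(x, u)` with `A x + B u ∈ V` and `C x + D u = 0` form a subspace of `ℝⁿ × ℝᵐ`. Choosing
such a `u` for each vector of a basis of `V` and extending linearly therefore gives a linear map `f`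
with `(x, f x)` admissible for every `x ∈ V`, and `F` is the matrix of `f`. Conversely, `u = F x`.
-/

theorem Submodule.exists_linearMap_forall_prod_mem {K E U : Type*} [DivisionRing K]
    [AddCommGroup E] [Module K E] [AddCommGroup U] [Module K U]
    {V : Submodule K E} {W : Submodule K (E × U)} (h : ∀ x ∈ V, ∃ u, (x, u) ∈ W) :
    ∃ f : E →ₗ[K] U, ∀ x ∈ V, (x, f x) ∈ W := by
  choose u hu using h
  let b := Module.Basis.ofVectorSpace K V
  let g : V →ₗ[K] U := b.constr ℕ fun i ↦ u (b i) (b i).2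
  have hg : W.comap (V.subtype.prod g) = ⊤ := by
    rw [eq_top_iff, ← b.span_eq, Submodule.span_le]
    rintro _ ⟨i, rfl⟩
    simpa [g] using hu _ (b i).2
  obtain ⟨f, hf⟩ := LinearMap.exists_extend g
  refine ⟨f, fun x hx ↦ ?_⟩
  have hx' : (⟨x, hx⟩ : V) ∈ W.comap (V.subtype.prod g) := hg ▸ Submodule.mem_top
  simpa [← hf] using hx'

theorem Matrix.add_mul_mulVec {α l m n : Type*} [NonUnitalSemiring α] [Fintype m] [Fintype n]
    (M : Matrix l n α) (N : Matrix l m α) (F : Matrix m n α) (x : n → α) :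
    (M + N * F).mulVec x = M.mulVec x + N.mulVec (F.mulVec x) := by
  rw [Matrix.add_mulVec, Matrix.mulVec_mulVec]

/-- `V` is output nulling iff it has an output nulling friend `F`. -/
theorem stmt7 {n m p : ℕ}
    (A : Matrix (Fin n) (Fin n) ℝ) (B : Matrix (Fin n) (Fin m) ℝ)
    (C : Matrix (Fin p) (Fin n) ℝ) (D : Matrix (Fin p) (Fin m) ℝ)
    (V : Submodule ℝ (Fin n → ℝ)) :
    (∀ x ∈ V, ∃ u : Fin m → ℝ,
      A.mulVec x + B.mulVec u ∈ V ∧ C.mulVec x + D.mulVec u = 0) ↔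
    (∃ F : Matrix (Fin m) (Fin n) ℝ,
      (∀ x ∈ V, (A + B * F).mulVec x ∈ V) ∧
      (∀ x ∈ V, (C + D * F).mulVec x = 0)) := by
  constructor
  · intro h
    let T := ((Matrix.toLin' A).coprod (Matrix.toLin' B)).prod
      ((Matrix.toLin' C).coprod (Matrix.toLin' D))
    obtain ⟨f, hf⟩ := Submodule.exists_linearMap_forall_prod_mem (W := (V.prod ⊥).comap T)
      (by simpa [T] using h)
    have hfV : ∀ x ∈ V, A.mulVec x + B.mulVec (f x) ∈ V ∧ C.mulVec x + D.mulVec (f x) = 0 := by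
      simpa [T] using hf
    have hF : ∀ x, (LinearMap.toMatrix' f).mulVec x = f x := fun x ↦ by
      rw [← Matrix.toLin'_apply, Matrix.toLin'_toMatrix']
    refine ⟨LinearMap.toMatrix' f, fun x hx ↦ ?_, fun x hx ↦ ?_⟩
    · simpa only [Matrix.add_mul_mulVec, hF] using (hfV x hx).1
    · simpa only [Matrix.add_mul_mulVec, hF] using (hfV x hx).2
  · rintro ⟨F, hA, hC⟩ x hx
    exact ⟨F.mulVec x, Matrix.add_mul_mulVec A B F x ▸ hA x hx,
      Matrix.add_mul_mulVec C D F x ▸ hC x hx⟩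
end

section
/- A subspace S is (A,B,C,D)-input containing if and only if there exists an output injection matrix G ∈ ℝ^{n×p} such that (A+GC)S ⊆ S and im(B+GD) ⊆ S. -/
/-!
Work on `S × U` with the maps `φ (x, u) = C x + D u` and `α (x, u) = A x + B u`. Input
containment says exactly that `α` sends `ker φ` into `S`, i.e. the composite of `α` with the
projection `V → V ⧸ S` kills `ker φ`. Over a field this composite therefore factors as
`-(q ∘ φ)` for some `q : Y → V ⧸ S`, and lifting `q` along the projection gives a linear `G`
with `A x + B u + G (C x + D u) ∈ S` for all `x ∈ S` and all `u`; taking `u = 0` or `x = 0` gives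
the two invariance conditions. The converse is the identity
`A x + B u = (A + G C) x + (B + G D) u - G (C x + D u)`.
-/

namespace LinearMap

variable {K V W Z : Type*} [DivisionRing K] [AddCommGroup V] [Module K V]
  [AddCommGroup W] [Module K W] [AddCommGroup Z] [Module K Z]

theorem exists_comp_eq_of_ker_le (f : V →ₗ[K] W) (h : V →ₗ[K] Z) (hle : ker f ≤ ker h) :
    ∃ g : W →ₗ[K] Z, g ∘ₗ f = h := by
  obtain ⟨g, hg⟩ := IsSemisimpleModule.extension_property ((ker f).liftQ f le_rfl)
    (ker_eq_bot.mp (Submodule.ker_liftQ_eq_bot _ _ _ le_rfl)) ((ker f).liftQ h hle)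
  refine ⟨g, ext fun v => ?_⟩
  simpa using congr($hg (Submodule.Quotient.mk v))

theorem exists_add_comp_mem_of_ker_le_comap (f : V →ₗ[K] W) (h : V →ₗ[K] Z) (S : Submodule K Z)
    (hle : ker f ≤ S.comap h) : ∃ g : W →ₗ[K] Z, ∀ v, h v + g (f v) ∈ S := by
  obtain ⟨q, hq⟩ := exists_comp_eq_of_ker_le f (-(S.mkQ ∘ₗ h)) fun v hv => by
    simpa [Submodule.Quotient.mk_eq_zero] using hle hv
  obtain ⟨g, hg⟩ := Module.projective_lifting_property S.mkQ q S.mkQ_surjective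
  refine ⟨g, fun v => ?_⟩
  rw [← Submodule.Quotient.mk_eq_zero, Submodule.Quotient.mk_add, ← S.mkQ_apply (g _),
    ← comp_apply, hg, ← comp_apply, hq]
  simp

end LinearMap

section InputContaining

variable {K V U Y : Type*} [DivisionRing K] [AddCommGroup V] [Module K V]
  [AddCommGroup U] [Module K U] [AddCommGroup Y] [Module K Y]

theorem Submodule.inputContaining_iff_exists_outputInjection (A : V →ₗ[K] V) (B : U →ₗ[K] V)
    (C : V →ₗ[K] Y) (D : U →ₗ[K] Y) (S : Submodule K V) :
    (∀ x ∈ S, ∀ u, C x + D u = 0 → A x + B u ∈ S) ↔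
      ∃ G : Y →ₗ[K] V, (∀ x ∈ S, (A + G ∘ₗ C) x ∈ S) ∧ ∀ u, (B + G ∘ₗ D) u ∈ S := by
  constructor
  · intro hS
    obtain ⟨G, hG⟩ := LinearMap.exists_add_comp_mem_of_ker_le_comap
      ((C ∘ₗ S.subtype).coprod D) ((A ∘ₗ S.subtype).coprod B) S
      fun v hv => hS v.1 v.1.2 v.2 hv
    exact ⟨G, fun x hx => by simpa using hG (⟨x, hx⟩, 0), fun u => by simpa using hG (0, u)⟩
  · rintro ⟨G, hAC, hBD⟩ x hx u hCD
    have key : A x + B u = (A + G ∘ₗ C) x + (B + G ∘ₗ D) u - G (C x + D u) := by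
      simp only [LinearMap.add_apply, LinearMap.comp_apply, map_add]
      abel
    rw [key, hCD, map_zero, sub_zero]
    exact S.add_mem (hAC x hx) (hBD u)

end InputContaining

/-- `S` is input containing iff it has an input containing friend `G`. -/
theorem stmt8 {n m p : ℕ}
    (A : Matrix (Fin n) (Fin n) ℝ) (B : Matrix (Fin n) (Fin m) ℝ)
    (C : Matrix (Fin p) (Fin n) ℝ) (D : Matrix (Fin p) (Fin m) ℝ)
    (S : Submodule ℝ (Fin n → ℝ)) :
    (∀ x ∈ S, ∀ u : Fin m → ℝ,
      C.mulVec x + D.mulVec u = 0 → A.mulVec x + B.mulVec u ∈ S) ↔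
    (∃ G : Matrix (Fin n) (Fin p) ℝ,
      (∀ x ∈ S, (A + G * C).mulVec x ∈ S) ∧
      (∀ u : Fin m → ℝ, (B + G * D).mulVec u ∈ S)) := by
  have h := S.inputContaining_iff_exists_outputInjection (Matrix.toLin' A) (Matrix.toLin' B)
    (Matrix.toLin' C) (Matrix.toLin' D)
  rw [Matrix.toLin'.surjective.exists] at h
  simpa only [Matrix.toLin'_apply, ← Matrix.toLin'_mul, ← map_add] using h
end

section
/- Let à ∈ 𝔽^{n₁×n₂}, B̃ ∈ 𝔽^{n₁×m}, C̃ ∈ 𝔽^{p×n₂} be matrices over a field 𝔽, and let M ⊆ 𝔽^{n₂} and N ⊆ 𝔽^{n₁} be subspaces. Then ÃM ⊆ N + im B̃ and Ã(M ∩ ker C̃) ⊆ N hold if and only if there exists K ∈ 𝔽^{m×p} such that (Ã + B̃ K C̃)M ⊆ N. -/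
/-! Reduce modulo `N`: with `f = Ã|_M mod N`, `b = B̃ mod N` and `c = C̃|_M`, the claim is that
`f = b ∘ k ∘ c` is solvable in `k` iff `range f ≤ range b` and `ker c ≤ ker f` (then `K = -k`).
For the converse, factor `f` through `M ⧸ ker c`, lift the factor along `b` (vector spaces are
projective), and extend it from `M ⧸ ker c ≅ range c` to the whole space by a left inverse of
the induced injection into `𝔽^p`. -/

open LinearMap Submodule

theorem LinearMap.exists_comp_eq_of_range_le {R V U W : Type*} [Ring R] [AddCommGroup V]
    [Module R V] [Module.Projective R V] [AddCommGroup U] [Module R U] [AddCommGroup W]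
    [Module R W] {f : V →ₗ[R] W} {b : U →ₗ[R] W} (hfb : range f ≤ range b) :
    ∃ h : V →ₗ[R] U, b ∘ₗ h = f := by
  obtain ⟨h, hh⟩ := Module.projective_lifting_property b.rangeRestrict
    (f.codRestrict _ fun v ↦ hfb (mem_range_self f v)) b.surjective_rangeRestrict
  exact ⟨h, by ext v; exact Subtype.ext_iff.mp congr($hh v)⟩

section

variable {K V U W Y : Type*} [DivisionRing K] [AddCommGroup V] [Module K V] [AddCommGroup U]
  [Module K U] [AddCommGroup W] [Module K W] [AddCommGroup Y] [Module K Y]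

namespace LinearMap

theorem exists_comp_eq_of_ker_le_s9 {c : V →ₗ[K] Y} {h : V →ₗ[K] U} (hch : ker c ≤ ker h) :
    ∃ k : Y →ₗ[K] U, k ∘ₗ c = h := by
  obtain ⟨l, hl⟩ := ((ker c).liftQ c le_rfl).exists_leftInverse_of_injective
    (ker_liftQ_eq_bot _ _ _ le_rfl)
  refine ⟨(ker c).liftQ h hch ∘ₗ l, ?_⟩
  ext v
  have hlc : l (c v) = Submodule.Quotient.mk v := congr($hl (Submodule.Quotient.mk v))
  simp only [comp_apply, hlc, liftQ_apply]

theorem exists_comp_comp_eq_iff {f : V →ₗ[K] W} {b : U →ₗ[K] W} {c : V →ₗ[K] Y} :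
    (∃ k : Y →ₗ[K] U, b ∘ₗ k ∘ₗ c = f) ↔ range f ≤ range b ∧ ker c ≤ ker f := by
  constructor
  · rintro ⟨k, rfl⟩
    exact ⟨range_comp_le_range _ _, by rw [← comp_assoc]; exact ker_le_ker_comp _ _⟩
  · rintro ⟨hfb, hcf⟩
    obtain ⟨h, hh⟩ := exists_comp_eq_of_range_le (f := (ker c).liftQ f hcf) (b := b)
      (by rwa [range_liftQ])
    obtain ⟨k, hk⟩ := exists_comp_eq_of_ker_le_s9 (c := c) (h := h ∘ₗ (ker c).mkQ)
      ((ker_mkQ _).ge.trans (ker_le_ker_comp _ _))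
    refine ⟨k, ?_⟩
    rw [hk, ← comp_assoc, hh, liftQ_mkQ]

end LinearMap

namespace Submodule

variable {M : Submodule K V} {N : Submodule K W}

theorem map_le_iff_mkQ_comp_subtype_eq_zero {g : V →ₗ[K] W} :
    M.map g ≤ N ↔ N.mkQ ∘ₗ g ∘ₗ M.subtype = 0 := by
  simp [LinearMap.ext_iff, SetLike.le_def]

theorem map_le_sup_range_iff {A : V →ₗ[K] W} {B : U →ₗ[K] W} :
    M.map A ≤ N ⊔ range B ↔ range (N.mkQ ∘ₗ A ∘ₗ M.subtype) ≤ range (N.mkQ ∘ₗ B) := by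
  simp only [range_comp, range_subtype]
  rw [map_le_iff_le_comap (f := N.mkQ), comap_map_mkQ]

theorem map_inf_ker_le_iff {A : V →ₗ[K] W} {C : V →ₗ[K] Y} :
    (M ⊓ ker C).map A ≤ N ↔ ker (C ∘ₗ M.subtype) ≤ ker (N.mkQ ∘ₗ A ∘ₗ M.subtype) := by
  rw [map_le_iff_le_comap]
  simp [SetLike.le_def]

theorem exists_map_add_comp_comp_le_iff {A : V →ₗ[K] W} {B : U →ₗ[K] W} {C : V →ₗ[K] Y} :
    (∃ k : Y →ₗ[K] U, M.map (A + B ∘ₗ k ∘ₗ C) ≤ N) ↔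
      M.map A ≤ N ⊔ range B ∧ (M ⊓ ker C).map A ≤ N := by
  rw [map_le_sup_range_iff, map_inf_ker_le_iff, ← exists_comp_comp_eq_iff]
  refine (Equiv.neg _).exists_congr fun k ↦ ?_
  rw [map_le_iff_mkQ_comp_subtype_eq_zero, Equiv.neg_apply, neg_comp, comp_neg,
    neg_eq_iff_add_eq_zero, add_comm, add_comp, comp_add]
  rfl

end Submodule

end

/-- `Ã M ⊆ N + im B̃` and `Ã (M ∩ ker C̃) ⊆ N` hold iff there is `K` with
`(Ã + B̃ K C̃) M ⊆ N`. -/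
theorem stmt9 {F : Type*} [Field F] {n₁ n₂ m p : ℕ}
    (Atil : Matrix (Fin n₁) (Fin n₂) F) (Btil : Matrix (Fin n₁) (Fin m) F)
    (Ctil : Matrix (Fin p) (Fin n₂) F)
    (M : Submodule F (Fin n₂ → F)) (N : Submodule F (Fin n₁ → F)) :
    ((∀ x ∈ M, ∃ y ∈ N, ∃ u : Fin m → F, Atil.mulVec x = y + Btil.mulVec u) ∧
     (∀ x ∈ M, Ctil.mulVec x = 0 → Atil.mulVec x ∈ N)) ↔
    (∃ K : Matrix (Fin m) (Fin p) F, ∀ x ∈ M, (Atil + Btil * K * Ctil).mulVec x ∈ N) := by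
  have key := exists_map_add_comp_comp_le_iff (M := M) (N := N) (A := Atil.mulVecLin)
    (B := Btil.mulVecLin) (C := Ctil.mulVecLin)
  rw [← Matrix.toLin'.toEquiv.exists_congr_right] at key
  simp_rw [map_le_iff_le_comap, SetLike.le_def, mem_comap, mem_inf, mem_ker, mem_sup, mem_range,
    LinearMap.add_apply, comp_apply, LinearEquiv.coe_toEquiv, Matrix.toLin'_apply,
    Matrix.mulVecLin_apply] at key
  simp_rw [Matrix.add_mulVec, Matrix.mul_assoc, ← Matrix.mulVec_mulVec, key, and_imp,
    exists_exists_eq_and]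
  simp only [eq_comm]
end

section
/- Let V be an (A,B,E,D_z)-output nulling subspace of ℝⁿ and S an (A,H,C,G_y)-input containing subspace. Assume (a) im[H;G_z] ⊆ (V ⊕ 0) + im[B;D_z], (b) (S ⊕ ℝ^q) ∩ ker[C G_y] ⊆ ker[E G_z], and (c) S ⊆ V. Then there exists a matrix K ∈ ℝ^{m×p} such that [A+BKC, H+BKG_y; E+D_zKC, G_z+D_zKG_y](S ⊕ ℝ^q) ⊆ V ⊕ 0. -/
/-!
Write ξ = (x, w) ∈ S × ℝ^q, y = C x + G_y w for the measurement and W = V ⊕ 0. A gain K works iff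
`(A x + H w, E x + G_z w) + (B u, D_z u) ∈ W` for `u = K y`, i.e. iff `T ∘ K ∘ Φ = L` in the quotient
by W, where `Φ ξ = y`, `T u = [(B u, D_z u)]` and `L ξ = -[(A x + H w, E x + G_z w)]`.
Condition (b), together with input containment and S ⊆ V, says `ker Φ ≤ ker L`, so L factors
through `range Φ`; output nulling (with S ⊆ V) and condition (a) say `range L ≤ range T`, so that
factor lifts through T. Extending the lift from `range Φ` to all of ℝ^p gives K.
-/

namespace LinearMap

variable {K X Y Z U : Type*} [AddCommGroup X] [AddCommGroup Y] [AddCommGroup Z] [AddCommGroup U]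

theorem exists_comp_rangeRestrict_eq_of_ker_le [Ring K] [Module K X] [Module K Y] [Module K Z]
    (Φ : X →ₗ[K] Y) (L : X →ₗ[K] Z) (hker : ker Φ ≤ ker L) :
    ∃ L' : range Φ →ₗ[K] Z, L' ∘ₗ Φ.rangeRestrict = L := by
  refine ⟨(ker Φ).liftQ L hker ∘ₗ Φ.quotKerEquivRange.symm.toLinearMap, ?_⟩
  ext ξ
  have : Φ.rangeRestrict ξ = Φ.quotKerEquivRange (Submodule.Quotient.mk ξ) :=
    Subtype.ext (Φ.quotKerEquivRange_apply_mk ξ).symm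
  simp [this]

variable [DivisionRing K] [Module K X] [Module K Y] [Module K Z] [Module K U]

theorem exists_comp_comp_eq_of_ker_le_of_range_le (Φ : X →ₗ[K] Y) (L : X →ₗ[K] Z)
    (T : U →ₗ[K] Z) (hker : ker Φ ≤ ker L) (hrange : range L ≤ range T) :
    ∃ F : Y →ₗ[K] U, T ∘ₗ F ∘ₗ Φ = L := by
  obtain ⟨L', hL'⟩ := Φ.exists_comp_rangeRestrict_eq_of_ker_le L hker
  have hL'T : ∀ y, L' y ∈ range T := by
    rintro ⟨_, ξ, rfl⟩
    exact hrange ⟨ξ, by rw [← hL']; rfl⟩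
  obtain ⟨G, hG⟩ := Module.projective_lifting_property T.rangeRestrict
    (L'.codRestrict (range T) hL'T) T.surjective_rangeRestrict
  obtain ⟨F, hF⟩ := exists_extend G
  refine ⟨F, ?_⟩
  rw [← hL']
  ext ξ
  have := congr($hG (Φ.rangeRestrict ξ))
  simpa [← hF] using congrArg Subtype.val this

theorem exists_feedback_add_mem (Φ : X →ₗ[K] Y) (P : X →ₗ[K] Z) (Q : U →ₗ[K] Z)
    (W : Submodule K Z) (hker : ∀ ξ, Φ ξ = 0 → P ξ ∈ W) (hsolv : ∀ ξ, ∃ u, P ξ + Q u ∈ W) :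
    ∃ F : Y →ₗ[K] U, ∀ ξ, P ξ + Q (F (Φ ξ)) ∈ W := by
  obtain ⟨F, hF⟩ := exists_comp_comp_eq_of_ker_le_of_range_le Φ (-(W.mkQ ∘ₗ P)) (W.mkQ ∘ₗ Q)
    (fun ξ hξ => by simpa using hker ξ hξ) (by
      rintro _ ⟨ξ, rfl⟩
      obtain ⟨u, hu⟩ := hsolv ξ
      refine ⟨u, ?_⟩
      simpa [← Submodule.Quotient.mk_add, eq_neg_iff_add_eq_zero, add_comm] using hu)
  refine ⟨F, fun ξ => ?_⟩
  have := congr($hF ξ)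
  simpa [← Submodule.Quotient.mk_add, eq_neg_iff_add_eq_zero, add_comm] using this

end LinearMap

theorem Matrix.add_mul_mul_mulVec_add {R l m n p q : Type*} [CommRing R] [Fintype m] [Fintype n]
    [Fintype p] [Fintype q] (A : Matrix l n R) (H : Matrix l q R) (B : Matrix l m R)
    (K : Matrix m p R) (C : Matrix p n R) (G : Matrix p q R) (x : n → R) (w : q → R) :
    (A + B * K * C).mulVec x + (H + B * K * G).mulVec w =
      A.mulVec x + H.mulVec w + B.mulVec (K.mulVec (C.mulVec x + G.mulVec w)) := by
  simp only [Matrix.add_mulVec, ← Matrix.mulVec_mulVec, Matrix.mulVec_add]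
  abel

theorem Matrix.exists_mulVec_add_mem_of_outputNulling {R ι μ κ ρ : Type*} [CommRing R]
    [Fintype ι] [Fintype μ] [Fintype κ] {A : Matrix ι ι R} {B : Matrix ι μ R} {H : Matrix ι κ R}
    {E : Matrix ρ ι R} {Dz : Matrix ρ μ R} {Gz : Matrix ρ κ R} {V : Submodule R (ι → R)}
    (hV : ∀ x ∈ V, ∃ u : μ → R, A.mulVec x + B.mulVec u ∈ V ∧ E.mulVec x + Dz.mulVec u = 0)
    (ha : ∀ w : κ → R, ∃ v ∈ V, ∃ u : μ → R,
      H.mulVec w = v + B.mulVec u ∧ Gz.mulVec w = Dz.mulVec u)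
    {x : ι → R} (hx : x ∈ V) (w : κ → R) :
    ∃ u : μ → R, A.mulVec x + H.mulVec w + B.mulVec u ∈ V ∧
      E.mulVec x + Gz.mulVec w + Dz.mulVec u = 0 := by
  obtain ⟨u₁, hu₁V, hu₁E⟩ := hV x hx
  obtain ⟨v, hv, u₂, hH, hG⟩ := ha w
  refine ⟨u₁ - u₂, ?_, ?_⟩
  · convert V.add_mem hu₁V hv using 1
    rw [hH, Matrix.mulVec_sub]
    abel
  · rw [← hu₁E, hG, Matrix.mulVec_sub]
    abel

/-- Lemma 8 (sufficiency): under conditions (a), (b), (c) there exists a static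
output feedback `K` mapping `S ⊕ W` into `V ⊕ 0`. -/
theorem stmt10 {n m p q r : ℕ}
    (A : Matrix (Fin n) (Fin n) ℝ) (B : Matrix (Fin n) (Fin m) ℝ)
    (H : Matrix (Fin n) (Fin q) ℝ) (C : Matrix (Fin p) (Fin n) ℝ)
    (Gy : Matrix (Fin p) (Fin q) ℝ) (E : Matrix (Fin r) (Fin n) ℝ)
    (Dz : Matrix (Fin r) (Fin m) ℝ) (Gz : Matrix (Fin r) (Fin q) ℝ)
    (V S : Submodule ℝ (Fin n → ℝ))
    (hV : ∀ x ∈ V, ∃ u : Fin m → ℝ,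
      A.mulVec x + B.mulVec u ∈ V ∧ E.mulVec x + Dz.mulVec u = 0)
    (hS : ∀ x ∈ S, ∀ w : Fin q → ℝ,
      C.mulVec x + Gy.mulVec w = 0 → A.mulVec x + H.mulVec w ∈ S)
    (ha : ∀ w : Fin q → ℝ, ∃ v ∈ V, ∃ u : Fin m → ℝ,
      H.mulVec w = v + B.mulVec u ∧ Gz.mulVec w = Dz.mulVec u)
    (hb : ∀ x ∈ S, ∀ w : Fin q → ℝ,
      C.mulVec x + Gy.mulVec w = 0 → E.mulVec x + Gz.mulVec w = 0)
    (hc : S ≤ V) :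
    ∃ K : Matrix (Fin m) (Fin p) ℝ, ∀ x ∈ S, ∀ w : Fin q → ℝ,
      (A + B * K * C).mulVec x + (H + B * K * Gy).mulVec w ∈ V ∧
      (E + Dz * K * C).mulVec x + (Gz + Dz * K * Gy).mulVec w = 0 := by
  let Φ : S × (Fin q → ℝ) →ₗ[ℝ] Fin p → ℝ := (C.mulVecLin ∘ₗ S.subtype).coprod Gy.mulVecLin
  let P : S × (Fin q → ℝ) →ₗ[ℝ] (Fin n → ℝ) × (Fin r → ℝ) :=
    ((A.mulVecLin ∘ₗ S.subtype).coprod H.mulVecLin).prod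
      ((E.mulVecLin ∘ₗ S.subtype).coprod Gz.mulVecLin)
  let Q : (Fin m → ℝ) →ₗ[ℝ] (Fin n → ℝ) × (Fin r → ℝ) := B.mulVecLin.prod Dz.mulVecLin
  have hP : ∀ x (hx : x ∈ S) w,
      P (⟨x, hx⟩, w) = (A.mulVec x + H.mulVec w, E.mulVec x + Gz.mulVec w) := fun _ _ _ => rfl
  have hΦ : ∀ x (hx : x ∈ S) w, Φ (⟨x, hx⟩, w) = C.mulVec x + Gy.mulVec w := fun _ _ _ => rfl
  have hQ : ∀ u, Q u = (B.mulVec u, Dz.mulVec u) := fun _ => rfl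
  have hker : ∀ ξ, Φ ξ = 0 → P ξ ∈ V.prod ⊥ := by
    rintro ⟨⟨x, hx⟩, w⟩ hxw
    exact Submodule.mem_prod.2 ⟨hc (hS x hx w hxw), hb x hx w hxw⟩
  have hsolv : ∀ ξ, ∃ u, P ξ + Q u ∈ V.prod ⊥ := by
    rintro ⟨⟨x, hx⟩, w⟩
    obtain ⟨u, hu⟩ := Matrix.exists_mulVec_add_mem_of_outputNulling hV ha (hc hx) w
    refine ⟨u, ?_⟩
    rwa [hP, hQ, Prod.mk_add_mk, Submodule.mem_prod, Submodule.mem_bot]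
  obtain ⟨F, hF⟩ := LinearMap.exists_feedback_add_mem Φ P Q (V.prod ⊥) hker hsolv
  refine ⟨LinearMap.toMatrix' F, fun x hx w => ?_⟩
  have := hF (⟨x, hx⟩, w)
  rw [hP, hQ, Prod.mk_add_mk, Submodule.mem_prod, Submodule.mem_bot, hΦ] at this
  simpa only [Matrix.add_mul_mul_mulVec_add, LinearMap.toMatrix'_mulVec] using this
end

section
/- Suppose K ∈ ℝ^{m×p} satisfies [A+BKC, H+BKG_y; E+D_zKC, G_z+D_zKG_y](S ⊕ ℝ^q) ⊆ V ⊕ 0 for subspaces V, S ⊆ ℝⁿ. Then (a) im[H;G_z] ⊆ (V ⊕ 0) + im[B;D_z] and (b) (S ⊕ ℝ^q) ∩ ker[C G_y] ⊆ ker[E G_z]. -/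
/-! The gain `K` acts only through the measured output `y = C x + G_y w`.
Taking `x = 0` and `u = -K G_y w` gives (a); when `y = 0` the feedback term vanishes, giving (b). -/

namespace Matrix

variable {R : Type*} [CommRing R] {k l m o : Type*} [Fintype l] [Fintype m] [Fintype o]

theorem feedback_mulVec_add_mulVec (M : Matrix k l R) (N : Matrix k m R) (K : Matrix m o R)
    (C : Matrix o l R) {q : Type*} [Fintype q] (P : Matrix k q R) (G : Matrix o q R)
    (x : l → R) (w : q → R) :
    (M + N * K * C) *ᵥ x + (P + N * K * G) *ᵥ w =
      M *ᵥ x + P *ᵥ w + N *ᵥ (K *ᵥ (C *ᵥ x + G *ᵥ w)) := by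
  simp only [add_mulVec, ← mulVec_mulVec, mulVec_add]
  abel

end Matrix

open Matrix in
/-- Lemma 8 (necessity): if `K` maps `S ⊕ W` into `V ⊕ 0`, then conditions
(a) and (b) hold. -/
theorem stmt11 {n m p q r : ℕ}
    (A : Matrix (Fin n) (Fin n) ℝ) (B : Matrix (Fin n) (Fin m) ℝ)
    (H : Matrix (Fin n) (Fin q) ℝ) (C : Matrix (Fin p) (Fin n) ℝ)
    (Gy : Matrix (Fin p) (Fin q) ℝ) (E : Matrix (Fin r) (Fin n) ℝ)
    (Dz : Matrix (Fin r) (Fin m) ℝ) (Gz : Matrix (Fin r) (Fin q) ℝ)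
    (V S : Submodule ℝ (Fin n → ℝ))
    (K : Matrix (Fin m) (Fin p) ℝ)
    (hK : ∀ x ∈ S, ∀ w : Fin q → ℝ,
      (A + B * K * C).mulVec x + (H + B * K * Gy).mulVec w ∈ V ∧
      (E + Dz * K * C).mulVec x + (Gz + Dz * K * Gy).mulVec w = 0) :
    (∀ w : Fin q → ℝ, ∃ v ∈ V, ∃ u : Fin m → ℝ,
      H.mulVec w = v + B.mulVec u ∧ Gz.mulVec w = Dz.mulVec u) ∧
    (∀ x ∈ S, ∀ w : Fin q → ℝ,
      C.mulVec x + Gy.mulVec w = 0 → E.mulVec x + Gz.mulVec w = 0) := by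
  simp only [feedback_mulVec_add_mulVec] at hK
  constructor
  · intro w
    obtain ⟨hV, hZ⟩ := hK 0 S.zero_mem w
    simp only [mulVec_zero, zero_add] at hV hZ
    refine ⟨_, hV, -(K *ᵥ (Gy *ᵥ w)), ?_, ?_⟩
    · rw [mulVec_neg, add_neg_cancel_right]
    · rw [mulVec_neg, eq_neg_of_add_eq_zero_left hZ]
  · intro x hx w hy
    simpa only [hy, mulVec_zero, add_zero] using (hK x hx w).2
end

section
/- If V₁ and V₂ are (A,B,C,D)-self bounded subspaces with V₁ ⊆ V₂, then every (A,B,C,D)-output nulling friend F of V₂ is also an output nulling friend of V₁; that is, if (A+BF)V₂ ⊆ V₂ and (C+DF)V₂ = 0, then (A+BF)V₁ ⊆ V₁ and (C+DF)V₁ = 0. -/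
/-!
For `x ∈ V₁` pick an input `u` keeping `x` in `V₁` with zero output. The inputs `u` and `F x`
both produce zero output from `x`, so `w = u - F x` lies in `ker D`, and
`B w = (A x + B u) - (A + B F) x` lies in `V₂ ⊆ V*`. Self-boundedness of `V₁` puts `B w` in `V₁`,
hence `(A + B F) x = (A x + B u) - B w ∈ V₁`.
-/

section OutputNulling

variable {R X U Y : Type*} [Ring R] [AddCommGroup X] [Module R X] [AddCommGroup U] [Module R U]
  [AddCommGroup Y] [Module R Y]

def IsOutputNulling (A : X →ₗ[R] X) (B : U →ₗ[R] X) (C : X →ₗ[R] Y) (D : U →ₗ[R] Y)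
    (V : Submodule R X) : Prop :=
  ∀ x ∈ V, ∃ u : U, A x + B u ∈ V ∧ C x + D u = 0

theorem IsOutputNulling.add_mem_of_friend {A : X →ₗ[R] X} {B : U →ₗ[R] X} {C : X →ₗ[R] Y}
    {D : U →ₗ[R] Y} {V₁ V₂ : Submodule R X} (hV₁ : IsOutputNulling A B C D V₁) (hle : V₁ ≤ V₂)
    (hbounded : ∀ u, D u = 0 → B u ∈ V₂ → B u ∈ V₁) {F : X → U}
    (hF : ∀ x ∈ V₂, A x + B (F x) ∈ V₂ ∧ C x + D (F x) = 0) {x : X} (hx : x ∈ V₁) :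
    A x + B (F x) ∈ V₁ := by
  obtain ⟨u, hu, huC⟩ := hV₁ x hx
  obtain ⟨hFA, hFC⟩ := hF x (hle hx)
  have hDw : D (u - F x) = 0 := by
    rw [map_sub, ← add_sub_add_left_eq_sub _ _ (C x), huC, hFC, sub_zero]
  have hBw : B (u - F x) = (A x + B u) - (A x + B (F x)) := by
    rw [map_sub, add_sub_add_left_eq_sub]
  have hBw₁ : B (u - F x) ∈ V₁ :=
    hbounded _ hDw (hBw ▸ V₂.sub_mem (hle hu) hFA)
  rw [hBw] at hBw₁
  simpa only [sub_sub_cancel] using V₁.sub_mem hu hBw₁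

end OutputNulling

theorem Matrix.add_mul_mulVec_s12 {ι κ μ : Type*} [Fintype κ] [Fintype μ] {R : Type*} [CommSemiring R]
    (A : Matrix ι κ R) (B : Matrix ι μ R) (F : Matrix μ κ R) (x : κ → R) :
    (A + B * F).mulVec x = A.mulVec x + B.mulVec (F.mulVec x) := by
  rw [Matrix.add_mulVec, Matrix.mulVec_mulVec]

theorem stmt12_general {n m p : ℕ}
    (A : Matrix (Fin n) (Fin n) ℝ) (B : Matrix (Fin n) (Fin m) ℝ)
    (C : Matrix (Fin p) (Fin n) ℝ) (D : Matrix (Fin p) (Fin m) ℝ)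
    (Vstar V₁ V₂ : Submodule ℝ (Fin n → ℝ))
    -- `Vstar` is the largest output nulling subspace
    (hVstarMax : ∀ W : Submodule ℝ (Fin n → ℝ),
      (∀ x ∈ W, ∃ u : Fin m → ℝ,
        A.mulVec x + B.mulVec u ∈ W ∧ C.mulVec x + D.mulVec u = 0) → W ≤ Vstar)
    -- `V₁`, `V₂` are output nulling
    (hV₁ : ∀ x ∈ V₁, ∃ u : Fin m → ℝ,
      A.mulVec x + B.mulVec u ∈ V₁ ∧ C.mulVec x + D.mulVec u = 0)
    (hV₂ : ∀ x ∈ V₂, ∃ u : Fin m → ℝ,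
      A.mulVec x + B.mulVec u ∈ V₂ ∧ C.mulVec x + D.mulVec u = 0)
    -- `V₁`, `V₂` are self bounded: `Vstar ∩ B (ker D) ⊆ Vᵢ`
    (hsb₁ : ∀ u : Fin m → ℝ, D.mulVec u = 0 → B.mulVec u ∈ Vstar → B.mulVec u ∈ V₁)
    (hsub : V₁ ≤ V₂)
    (F : Matrix (Fin m) (Fin n) ℝ)
    (hF₂ : (∀ x ∈ V₂, (A + B * F).mulVec x ∈ V₂) ∧ (∀ x ∈ V₂, (C + D * F).mulVec x = 0)) :
    (∀ x ∈ V₁, (A + B * F).mulVec x ∈ V₁) ∧ (∀ x ∈ V₁, (C + D * F).mulVec x = 0) := by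
  have hV₂star : V₂ ≤ Vstar := hVstarMax V₂ hV₂
  have hV₁ON : IsOutputNulling A.mulVecLin B.mulVecLin C.mulVecLin D.mulVecLin V₁ := hV₁
  refine ⟨fun x hx => ?_, fun x hx => hF₂.2 x (hsub hx)⟩
  rw [Matrix.add_mul_mulVec_s12]
  refine hV₁ON.add_mem_of_friend hsub (fun u hDu hBu => hsb₁ u hDu (hV₂star hBu))
    (F := F.mulVecLin) (fun y hy => ?_) hx
  simpa only [Matrix.mulVecLin_apply, ← Matrix.add_mul_mulVec_s12] using
    ⟨hF₂.1 y hy, hF₂.2 y hy⟩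

/-- If `V₁ ⊆ V₂` are self bounded, every output nulling friend of `V₂` is a friend of `V₁`. -/
theorem stmt12 {n m p : ℕ}
    (A : Matrix (Fin n) (Fin n) ℝ) (B : Matrix (Fin n) (Fin m) ℝ)
    (C : Matrix (Fin p) (Fin n) ℝ) (D : Matrix (Fin p) (Fin m) ℝ)
    (Vstar V₁ V₂ : Submodule ℝ (Fin n → ℝ))
    -- `Vstar` is the largest output nulling subspace
    (hVstarON : ∀ x ∈ Vstar, ∃ u : Fin m → ℝ,
      A.mulVec x + B.mulVec u ∈ Vstar ∧ C.mulVec x + D.mulVec u = 0)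
    (hVstarMax : ∀ W : Submodule ℝ (Fin n → ℝ),
      (∀ x ∈ W, ∃ u : Fin m → ℝ,
        A.mulVec x + B.mulVec u ∈ W ∧ C.mulVec x + D.mulVec u = 0) → W ≤ Vstar)
    -- `V₁`, `V₂` are output nulling
    (hV₁ : ∀ x ∈ V₁, ∃ u : Fin m → ℝ,
      A.mulVec x + B.mulVec u ∈ V₁ ∧ C.mulVec x + D.mulVec u = 0)
    (hV₂ : ∀ x ∈ V₂, ∃ u : Fin m → ℝ,
      A.mulVec x + B.mulVec u ∈ V₂ ∧ C.mulVec x + D.mulVec u = 0)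
    -- `V₁`, `V₂` are self bounded: `Vstar ∩ B (ker D) ⊆ Vᵢ`
    (hsb₁ : ∀ u : Fin m → ℝ, D.mulVec u = 0 → B.mulVec u ∈ Vstar → B.mulVec u ∈ V₁)
    (hsb₂ : ∀ u : Fin m → ℝ, D.mulVec u = 0 → B.mulVec u ∈ Vstar → B.mulVec u ∈ V₂)
    (hsub : V₁ ≤ V₂)
    (F : Matrix (Fin m) (Fin n) ℝ)
    (hF₂ : (∀ x ∈ V₂, (A + B * F).mulVec x ∈ V₂) ∧ (∀ x ∈ V₂, (C + D * F).mulVec x = 0)) :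
    (∀ x ∈ V₁, (A + B * F).mulVec x ∈ V₁) ∧ (∀ x ∈ V₁, (C + D * F).mulVec x = 0) :=
  stmt12_general A B C D Vstar V₁ V₂ hVstarMax hV₁ hV₂ hsb₁ hsub F hF₂
end

section
/- If S₁ and S₂ are (A,B,C,D)-self hidden subspaces with S₁ ⊆ S₂, then every (A,B,C,D)-input containing friend G of S₁ is also an input containing friend of S₂; that is, if (A+GC)S₁ ⊆ S₁ and im(B+GD) ⊆ S₁, then (A+GC)S₂ ⊆ S₂ and im(B+GD) ⊆ S₂. -/
/-!
Write `x ∈ S₂` as `x = s + y` with `s ∈ S*` and `C y = D u`. Minimality gives `S* ⊆ S₁`, so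
`(A + GC) s ∈ S₁ ⊆ S₂`. For the hidden part, `(A + GC) y = (A y - B u) + (B + GD) u`: the first
summand lies in `S₂` because `S₂` is input containing and `C y + D (-u) = 0`, the second lies in
`im (B + GD) ⊆ S₁ ⊆ S₂`.
-/

open Matrix

section InputContaining

variable {R ι κ μ : Type*} [Ring R] [Fintype ι] [Fintype κ] [Fintype μ]
  (A : Matrix ι ι R) (B : Matrix ι κ R) (C : Matrix μ ι R) (D : Matrix μ κ R)

def IsInputContaining (S : Submodule R (ι → R)) : Prop :=
  ∀ x ∈ S, ∀ u : κ → R, C *ᵥ x + D *ᵥ u = 0 → A *ᵥ x + B *ᵥ u ∈ S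

def IsInputContainingFriend (G : Matrix ι μ R) (S : Submodule R (ι → R)) : Prop :=
  (∀ x ∈ S, (A + G * C) *ᵥ x ∈ S) ∧ ∀ u : κ → R, (B + G * D) *ᵥ u ∈ S

variable {A B C D}

theorem IsInputContaining.add_mul_mulVec_mem {S : Submodule R (ι → R)}
    (hS : IsInputContaining A B C D S) {G : Matrix ι μ R}
    (hG : ∀ u : κ → R, (B + G * D) *ᵥ u ∈ S) {y : ι → R} (hy : y ∈ S) {u : κ → R}
    (hCy : C *ᵥ y = D *ᵥ u) : (A + G * C) *ᵥ y ∈ S := by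
  have hker : C *ᵥ y + D *ᵥ (-u) = 0 := by rw [mulVec_neg, hCy, add_neg_cancel]
  have hsplit : (A + G * C) *ᵥ y = (A *ᵥ y + B *ᵥ (-u)) + (B + G * D) *ᵥ u := by
    simp only [add_mulVec, mulVec_neg, ← mulVec_mulVec, hCy]
    abel
  rw [hsplit]
  exact S.add_mem (hS y hy (-u) hker) (hG u)

theorem IsInputContainingFriend.mono {G : Matrix ι μ R} {S₀ S₁ S₂ : Submodule R (ι → R)}
    (hG : IsInputContainingFriend A B C D G S₁) (hS₂ : IsInputContaining A B C D S₂)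
    (h₀₁ : S₀ ≤ S₁) (h₁₂ : S₁ ≤ S₂)
    (hhidden : ∀ x ∈ S₂, ∃ s ∈ S₀, ∃ y : ι → R, ∃ u : κ → R, x = s + y ∧ C *ᵥ y = D *ᵥ u) :
    IsInputContainingFriend A B C D G S₂ := by
  refine ⟨fun x hx => ?_, fun u => h₁₂ (hG.2 u)⟩
  obtain ⟨s, hs, y, u, rfl, hCy⟩ := hhidden x hx
  have hy : y ∈ S₂ := by
    simpa using S₂.sub_mem hx (h₁₂ (h₀₁ hs))
  rw [mulVec_add]
  exact S₂.add_mem (h₁₂ (hG.1 s (h₀₁ hs)))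
    (hS₂.add_mul_mulVec_mem (fun v => h₁₂ (hG.2 v)) hy hCy)

end InputContaining

theorem stmt13_general {n m p : ℕ}
    (A : Matrix (Fin n) (Fin n) ℝ) (B : Matrix (Fin n) (Fin m) ℝ)
    (C : Matrix (Fin p) (Fin n) ℝ) (D : Matrix (Fin p) (Fin m) ℝ)
    (Sstar S₁ S₂ : Submodule ℝ (Fin n → ℝ))
    -- `Sstar` is the smallest input containing subspace
    (hSstarMin : ∀ W : Submodule ℝ (Fin n → ℝ),
      (∀ x ∈ W, ∀ u : Fin m → ℝ,
        C.mulVec x + D.mulVec u = 0 → A.mulVec x + B.mulVec u ∈ W) → Sstar ≤ W)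
    -- `S₁`, `S₂` are input containing
    (hS₁ : ∀ x ∈ S₁, ∀ u : Fin m → ℝ,
      C.mulVec x + D.mulVec u = 0 → A.mulVec x + B.mulVec u ∈ S₁)
    (hS₂ : ∀ x ∈ S₂, ∀ u : Fin m → ℝ,
      C.mulVec x + D.mulVec u = 0 → A.mulVec x + B.mulVec u ∈ S₂)
    -- `S₁`, `S₂` are self hidden: `Sᵢ ⊆ Sstar + C⁻¹ (im D)`
    (hsh₂ : ∀ x ∈ S₂, ∃ s ∈ Sstar, ∃ y : Fin n → ℝ, ∃ u : Fin m → ℝ,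
      x = s + y ∧ C.mulVec y = D.mulVec u)
    (hsub : S₁ ≤ S₂)
    (G : Matrix (Fin n) (Fin p) ℝ)
    (hG₁ : (∀ x ∈ S₁, (A + G * C).mulVec x ∈ S₁) ∧
           (∀ u : Fin m → ℝ, (B + G * D).mulVec u ∈ S₁)) :
    (∀ x ∈ S₂, (A + G * C).mulVec x ∈ S₂) ∧
    (∀ u : Fin m → ℝ, (B + G * D).mulVec u ∈ S₂) :=
  IsInputContainingFriend.mono hG₁ hS₂ (hSstarMin S₁ hS₁) hsub hsh₂

/-- If `S₁ ⊆ S₂` are self hidden, every input containing friend of `S₁` is a friend of `S₂`. -/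
theorem stmt13 {n m p : ℕ}
    (A : Matrix (Fin n) (Fin n) ℝ) (B : Matrix (Fin n) (Fin m) ℝ)
    (C : Matrix (Fin p) (Fin n) ℝ) (D : Matrix (Fin p) (Fin m) ℝ)
    (Sstar S₁ S₂ : Submodule ℝ (Fin n → ℝ))
    -- `Sstar` is the smallest input containing subspace
    (hSstarIC : ∀ x ∈ Sstar, ∀ u : Fin m → ℝ,
      C.mulVec x + D.mulVec u = 0 → A.mulVec x + B.mulVec u ∈ Sstar)
    (hSstarMin : ∀ W : Submodule ℝ (Fin n → ℝ),
      (∀ x ∈ W, ∀ u : Fin m → ℝ,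
        C.mulVec x + D.mulVec u = 0 → A.mulVec x + B.mulVec u ∈ W) → Sstar ≤ W)
    -- `S₁`, `S₂` are input containing
    (hS₁ : ∀ x ∈ S₁, ∀ u : Fin m → ℝ,
      C.mulVec x + D.mulVec u = 0 → A.mulVec x + B.mulVec u ∈ S₁)
    (hS₂ : ∀ x ∈ S₂, ∀ u : Fin m → ℝ,
      C.mulVec x + D.mulVec u = 0 → A.mulVec x + B.mulVec u ∈ S₂)
    -- `S₁`, `S₂` are self hidden: `Sᵢ ⊆ Sstar + C⁻¹ (im D)`
    (hsh₁ : ∀ x ∈ S₁, ∃ s ∈ Sstar, ∃ y : Fin n → ℝ, ∃ u : Fin m → ℝ,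
      x = s + y ∧ C.mulVec y = D.mulVec u)
    (hsh₂ : ∀ x ∈ S₂, ∃ s ∈ Sstar, ∃ y : Fin n → ℝ, ∃ u : Fin m → ℝ,
      x = s + y ∧ C.mulVec y = D.mulVec u)
    (hsub : S₁ ≤ S₂)
    (G : Matrix (Fin n) (Fin p) ℝ)
    (hG₁ : (∀ x ∈ S₁, (A + G * C).mulVec x ∈ S₁) ∧
           (∀ u : Fin m → ℝ, (B + G * D).mulVec u ∈ S₁)) :
    (∀ x ∈ S₂, (A + G * C).mulVec x ∈ S₂) ∧
    (∀ u : Fin m → ℝ, (B + G * D).mulVec u ∈ S₂) :=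
  stmt13_general A B C D Sstar S₁ S₂ hSstarMin hS₁ hS₂ hsh₂ hsub G hG₁
end
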